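/- arXiv:1709.09653 — 6 statements merged into one kernel-verified Lean document; each statement's English description precedes it below -/
import Mathlib

section
/- Let J ∈ M₄(ℂ) have rows (i,1,0,0), (0,i,0,0), (0,0,−i,1), (0,0,0,−i); let E₄₁ ∈ M₄(ℂ) be the matrix whose only nonzero entry is a 1 in position (4,1); let E := Θ⁻¹E₄₁Θ; let N ∈ M₄(ℂ) have rows (−i/8, 0, 0, 0), (−1/4, −i/8, 0, 0), (0, 0, i/8, 0), (0, 0, −1/4, i/8); and let Φ₁ ∈ M₄(ℂ) have rows (−3/16, −i/8, 3/16, −i/8), (i/8, −3/16, −i/8, −1/16), (3/16, i/8, −3/16, i/8), (i/8, −1/16, −i/8, −3/16). Then JΦ₁ − Φ₁J = N − E. Equivalently, for all μ ∈ ℂ, (J + μE)(I + μΦ₁) − (I + μΦ₁)(J + μN) = μ²(EΦ₁ − Φ₁N); that is, the near-identity linear change of variables I + μΦ₁ conjugates J + μE into J + μN up to terms of order μ². -/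
/-- The Jordan normal form J with double non-semisimple eigenvalues ±i. -/
noncomputable def SHmatJ : Matrix (Fin 4) (Fin 4) ℂ :=
  !![Complex.I, 1, 0, 0;
     0, Complex.I, 0, 0;
     0, 0, -Complex.I, 1;
     0, 0, 0, -Complex.I]

/-- The linearizing change of variables Θ. -/
noncomputable def SHmatTheta : Matrix (Fin 4) (Fin 4) ℂ :=
  !![1, 0, 1, 0;
     Complex.I, 1, -Complex.I, 1;
     0, 2 * Complex.I, 0, -2 * Complex.I;
     0, -2, 0, -2]

/-- The elementary matrix with a single 1 in position (4,1). -/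
noncomputable def SHmatE41 : Matrix (Fin 4) (Fin 4) ℂ :=
  !![0, 0, 0, 0; 0, 0, 0, 0; 0, 0, 0, 0; 1, 0, 0, 0]

/-- The linearization of the parameter term in Jordan coordinates. -/
noncomputable def SHmatE : Matrix (Fin 4) (Fin 4) ℂ :=
  SHmatTheta⁻¹ * SHmatE41 * SHmatTheta

/-- The μ-linear part of the normal form. -/
noncomputable def SHmatN : Matrix (Fin 4) (Fin 4) ℂ :=
  !![-Complex.I / 8, 0, 0, 0;
     -1 / 4, -Complex.I / 8, 0, 0;
     0, 0, Complex.I / 8, 0;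
     0, 0, -1 / 4, Complex.I / 8]

/-- The explicit μ-dependent part Φ₁ of the normal form transformation. -/
noncomputable def SHmatPhi1 : Matrix (Fin 4) (Fin 4) ℂ :=
  !![-3 / 16, -Complex.I / 8, 3 / 16, -Complex.I / 8;
     Complex.I / 8, -3 / 16, -Complex.I / 8, -1 / 16;
     3 / 16, Complex.I / 8, -3 / 16, Complex.I / 8;
     Complex.I / 8, -1 / 16, -Complex.I / 8, -3 / 16]

/-!
Θ is invertible with an explicit inverse, which makes E an explicit rank-one matrix; the homological
equation JΦ₁ − Φ₁J = N − E is then an entrywise identity. The μ² statement is algebra alone: expanding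
the product, the μ-linear terms are μ(JΦ₁ − Φ₁J − N + E), which the homological equation kills.
-/

theorem add_smul_mul_one_add_smul_sub_eq_sq_smul_of_commutator_eq {K A : Type*} [CommRing K]
    [Ring A] [Algebra K A] {J E N Φ : A} (μ : K) (h : J * Φ - Φ * J = N - E) :
    (J + μ • E) * (1 + μ • Φ) - (1 + μ • Φ) * (J + μ • N) = μ ^ 2 • (E * Φ - Φ * N) := by
  rw [sub_eq_iff_eq_add] at h
  simp only [mul_add, add_mul, mul_one, one_mul, mul_smul_comm, smul_mul_assoc, h]
  module

open Complex

theorem SHmatTheta_inv :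
    SHmatTheta⁻¹ =
      !![1 / 2, -I / 2, 0, -I / 4;
         0, 0, -I / 4, -1 / 4;
         1 / 2, I / 2, 0, I / 4;
         0, 0, I / 4, -1 / 4] := by
  refine Matrix.inv_eq_left_inv ?_
  ext i j
  fin_cases i <;> fin_cases j <;>
    simp [SHmatTheta, Matrix.mul_apply, Fin.sum_univ_four] <;> grind [I_mul_I]

theorem SHmatE_eq :
    SHmatE =
      !![-I / 4, 0, -I / 4, 0;
         -1 / 4, 0, -1 / 4, 0;
         I / 4, 0, I / 4, 0;
         -1 / 4, 0, -1 / 4, 0] := by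
  rw [SHmatE, SHmatTheta_inv]
  ext i j
  fin_cases i <;> fin_cases j <;>
    simp [SHmatTheta, SHmatE41, Matrix.mul_apply, Fin.sum_univ_four]

theorem SHmat_homological_equation :
    SHmatJ * SHmatPhi1 - SHmatPhi1 * SHmatJ = SHmatN - SHmatE := by
  rw [SHmatE_eq]
  ext i j
  fin_cases i <;> fin_cases j <;>
    simp [SHmatJ, SHmatPhi1, SHmatN] <;> grind [I_mul_I]

/-- **The μ-linear part of the normal form transformation.**
JΦ₁ − Φ₁J = N − E; equivalently, for all μ, the near-identity change of
variables I + μΦ₁ conjugates J + μE into J + μN up to terms of order μ². -/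
theorem normal_form_linear_homological_equation :
    SHmatJ * SHmatPhi1 - SHmatPhi1 * SHmatJ = SHmatN - SHmatE ∧
    ∀ μ : ℂ,
      (SHmatJ + μ • SHmatE) * (1 + μ • SHmatPhi1)
          - (1 + μ • SHmatPhi1) * (SHmatJ + μ • SHmatN)
        = (μ ^ 2) • (SHmatE * SHmatPhi1 - SHmatPhi1 * SHmatN) :=
  ⟨SHmat_homological_equation, fun μ ↦
    add_smul_mul_one_add_smul_sub_eq_sq_smul_of_commutator_eq μ SHmat_homological_equation⟩
end

section
/- There exists a C² function r: (−∞,0] → (0,∞) with r(0) = 1/2, satisfying r'(y) = √(r(y)² + r(y)⁴/2) for all y ≤ 0 and r(y) → 0 as y → −∞. Moreover, for every φ ∈ ℝ, the pair (a,b) := (e^{iφ}r, e^{iφ}r') solves a' = b, b' = a + a|a|² on (−∞,0], satisfies (a,b)(0) = (e^{iφ}/2, e^{iφ}·3/(4√2)), tends to (0,0) as y → −∞, and along this solution Im(a·conj(b)) = 0 and |b|² − |a|² − (1/2)|a|⁴ = 0 identically. -/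
/-!
On the unstable manifold of the origin the first integral |b|² − |a|² − |a|⁴/2 vanishes, so for
real profiles the system reduces to the separatrix equation r' = √(r² + r⁴/2). It is solved
explicitly by r(y) = √2 / sinh (t₀ − y), and t₀ = arsinh (2√2) gives r(0) = 1/2. Differentiating
the separatrix equation gives r'' = r + r³, and the phase rotations (a, b) ↦ (e^{iφ} a, e^{iφ} b)
are symmetries of the system.
-/

open Filter Set Real Topology

lemma tendsto_sinh_atTop : Tendsto sinh atTop atTop :=
  tendsto_atTop_mono' atTop (eventually_ge_atTop 0 |>.mono fun _ hx => self_le_sinh_iff.2 hx)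
    tendsto_id

noncomputable def cschProfile (t₀ y : ℝ) : ℝ := √2 / sinh (t₀ - y)

section cschProfile

variable {t₀ y : ℝ}

lemma sinh_sub_pos (h : y < t₀) : 0 < sinh (t₀ - y) := sinh_pos_iff.2 (sub_pos.2 h)

lemma cschProfile_pos (h : y < t₀) : 0 < cschProfile t₀ y := div_pos (by positivity) (sinh_sub_pos h)

lemma hasDerivAt_cschProfile (h : y < t₀) :
    HasDerivAt (cschProfile t₀) (√2 * cosh (t₀ - y) / sinh (t₀ - y) ^ 2) y := by
  have hsinh := ((hasDerivAt_id y).const_sub t₀).sinh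
  refine ((hasDerivAt_const y √2).fun_div hsinh (sinh_sub_pos h).ne').congr_deriv ?_
  simp

lemma sqrt_energy_cschProfile (h : y < t₀) :
    √(cschProfile t₀ y ^ 2 + cschProfile t₀ y ^ 4 / 2) = √2 * cosh (t₀ - y) / sinh (t₀ - y) ^ 2 := by
  have hs := (sinh_sub_pos h).ne'
  rw [← sqrt_sq (by positivity : 0 ≤ √2 * cosh (t₀ - y) / sinh (t₀ - y) ^ 2)]
  congr 1
  simp only [cschProfile, div_pow, mul_pow, cosh_sq]
  field_simp
  rw [sq_sqrt zero_le_two]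
  ring

lemma hasDerivAt_cschProfile_sqrt_energy (h : y < t₀) :
    HasDerivAt (cschProfile t₀) (√(cschProfile t₀ y ^ 2 + cschProfile t₀ y ^ 4 / 2)) y := by
  rw [sqrt_energy_cschProfile h]
  exact hasDerivAt_cschProfile h

lemma contDiffAt_cschProfile {n : WithTop ℕ∞} (h : y < t₀) : ContDiffAt ℝ n (cschProfile t₀) y :=
  contDiffAt_const.div (contDiff_sinh.comp (contDiff_const.sub contDiff_id)).contDiffAt
    (sinh_sub_pos h).ne'

lemma tendsto_cschProfile_atBot : Tendsto (cschProfile t₀) atBot (𝓝 0) :=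
  tendsto_const_nhds.div_atTop <| tendsto_sinh_atTop.comp <|
    tendsto_atTop_add_const_left _ t₀ tendsto_neg_atBot_atTop

end cschProfile

lemma cschProfile_arsinh_zero : cschProfile (arsinh (2 * √2)) 0 = 1 / 2 := by
  have : √2 ≠ 0 := by positivity
  rw [cschProfile, sub_zero, sinh_arsinh]
  field_simp

lemma HasDerivWithinAt.sqrt_energy {r : ℝ → ℝ} {s : Set ℝ} {y : ℝ}
    (hr : HasDerivWithinAt r √(r y ^ 2 + r y ^ 4 / 2) s y) (hy : r y ≠ 0) :
    HasDerivWithinAt (fun y => √(r y ^ 2 + r y ^ 4 / 2)) (r y + r y ^ 3) s y := by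
  have hE : r y ^ 2 + r y ^ 4 / 2 ≠ 0 := by positivity
  have hE' : HasDerivWithinAt (fun y => r y ^ 2 + r y ^ 4 / 2)
      (2 * r y * √(r y ^ 2 + r y ^ 4 / 2) + 2 * r y ^ 3 * √(r y ^ 2 + r y ^ 4 / 2)) s y := by
    refine ((hr.fun_pow 2).add ((hr.fun_pow 4).div_const 2)).congr_deriv ?_
    norm_num
    ring
  refine (hE'.sqrt hE).congr_deriv ?_
  field_simp

def IsGinzburgLandauSolution (a b : ℝ → ℂ) (S : Set ℝ) : Prop :=
  ∀ y ∈ S, HasDerivWithinAt a (b y) S y ∧ HasDerivWithinAt b (a y + a y * (‖a y‖ : ℂ) ^ 2) S y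

namespace IsGinzburgLandauSolution

variable {a b : ℝ → ℂ} {S : Set ℝ}

lemma ofReal {r s : ℝ → ℝ} (hr : ∀ y ∈ S, HasDerivWithinAt r (s y) S y)
    (hs : ∀ y ∈ S, HasDerivWithinAt s (r y + r y ^ 3) S y) :
    IsGinzburgLandauSolution (fun y => (r y : ℂ)) (fun y => (s y : ℂ)) S := by
  intro y hy
  refine ⟨(hr y hy).ofReal_comp, ((hs y hy).ofReal_comp).congr_deriv ?_⟩
  rw [Complex.norm_real, Real.norm_eq_abs, ← Complex.ofReal_pow, sq_abs]
  push_cast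
  ring

lemma const_mul (h : IsGinzburgLandauSolution a b S) {c : ℂ} (hc : ‖c‖ = 1) :
    IsGinzburgLandauSolution (fun y => c * a y) (fun y => c * b y) S := by
  intro y hy
  refine ⟨(h y hy).1.const_mul c, ((h y hy).2.const_mul c).congr_deriv ?_⟩
  rw [norm_mul, hc, one_mul]
  ring

end IsGinzburgLandauSolution

lemma im_mul_ofReal_mul_conj_mul_ofReal (c : ℂ) (x z : ℝ) :
    (c * x * (starRingEnd ℂ) (c * z)).im = 0 := by
  rw [map_mul, Complex.conj_ofReal, mul_mul_mul_comm, Complex.mul_conj, ← Complex.ofReal_mul,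
    ← Complex.ofReal_mul, Complex.ofReal_im]

lemma energy_eq_zero_of_norm_eq_one {c : ℂ} (hc : ‖c‖ = 1) (x : ℝ) :
    ‖c * (√(x ^ 2 + x ^ 4 / 2) : ℂ)‖ ^ 2 - ‖c * (x : ℂ)‖ ^ 2 - 1 / 2 * ‖c * (x : ℂ)‖ ^ 4 = 0 := by
  simp only [norm_mul, hc, one_mul, Complex.norm_real, Real.norm_eq_abs, sq_abs,
    abs_of_nonneg (sqrt_nonneg _), sq_sqrt (by positivity : 0 ≤ x ^ 2 + x ^ 4 / 2)]
  rw [show |x| ^ 4 = (|x| ^ 2) ^ 2 by ring, sq_abs]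
  ring

lemma sqrt_energy_one_half : √((1 / 2 : ℝ) ^ 2 + (1 / 2) ^ 4 / 2) = 3 / (4 * √2) := by
  rw [← sqrt_sq (by positivity : 0 ≤ 3 / (4 * √2))]
  congr 1
  rw [div_pow 3, mul_pow, sq_sqrt zero_le_two]
  norm_num

/-- **The unstable manifold of the origin for a' = b, b' = a + a|a|².**
There is a C² function r on (−∞,0] with r(0) = 1/2, r' = √(r² + r⁴/2),
r → 0 at −∞, and for each φ the pair (e^{iφ}r, e^{iφ}r') solves the σ = +1
Ginzburg–Landau system on (−∞,0], passes through (e^{iφ}/2, e^{iφ}·3/(4√2)) at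
y = 0, tends to (0,0) at −∞, and on it M = 0 and H⁻ = 0 identically. -/
theorem unstable_manifold_of_origin :
    ∃ r : ℝ → ℝ,
      (∀ y ∈ Set.Iic (0 : ℝ), 0 < r y) ∧
      r 0 = 1 / 2 ∧
      ContDiffOn ℝ 2 r (Set.Iic 0) ∧
      (∀ y ∈ Set.Iic (0 : ℝ),
        HasDerivWithinAt r (Real.sqrt ((r y) ^ 2 + (r y) ^ 4 / 2)) (Set.Iic 0) y) ∧
      Tendsto r atBot (nhds 0) ∧
      ∀ φ : ℝ,
        let a : ℝ → ℂ := fun y => Complex.exp (Complex.I * φ) * (r y : ℂ)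
        let b : ℝ → ℂ := fun y =>
          Complex.exp (Complex.I * φ) * (Real.sqrt ((r y) ^ 2 + (r y) ^ 4 / 2) : ℂ)
        (∀ y ∈ Set.Iic (0 : ℝ),
            HasDerivWithinAt a (b y) (Set.Iic 0) y ∧
            HasDerivWithinAt b (a y + a y * ((‖a y‖ : ℂ)) ^ 2) (Set.Iic 0) y) ∧
        a 0 = Complex.exp (Complex.I * φ) / 2 ∧
        b 0 = Complex.exp (Complex.I * φ) * 3 / (4 * (Real.sqrt 2 : ℂ)) ∧
        Tendsto a atBot (nhds 0) ∧
        Tendsto b atBot (nhds 0) ∧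
        (∀ y ∈ Set.Iic (0 : ℝ), (a y * (starRingEnd ℂ) (b y)).im = 0) ∧
        (∀ y ∈ Set.Iic (0 : ℝ), ‖b y‖ ^ 2 - ‖a y‖ ^ 2 - (1 / 2) * ‖a y‖ ^ 4 = 0) := by
  set r := cschProfile (arsinh (2 * √2))
  have hlt : ∀ y ∈ Iic (0 : ℝ), y < arsinh (2 * √2) :=
    fun y hy => hy.trans_lt (arsinh_pos_iff.2 (by positivity))
  have hr : ∀ y ∈ Iic (0 : ℝ), HasDerivWithinAt r √(r y ^ 2 + r y ^ 4 / 2) (Iic 0) y :=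
    fun y hy => (hasDerivAt_cschProfile_sqrt_energy (hlt y hy)).hasDerivWithinAt
  have hs : ∀ y ∈ Iic (0 : ℝ),
      HasDerivWithinAt (fun y => √(r y ^ 2 + r y ^ 4 / 2)) (r y + r y ^ 3) (Iic 0) y :=
    fun y hy => (hr y hy).sqrt_energy (cschProfile_pos (hlt y hy)).ne'
  have hr0 : Tendsto r atBot (𝓝 0) := tendsto_cschProfile_atBot
  have hs0 : Tendsto (fun y => √(r y ^ 2 + r y ^ 4 / 2)) atBot (𝓝 0) :=
    ((by fun_prop : Continuous fun x : ℝ => √(x ^ 2 + x ^ 4 / 2)).tendsto' 0 0 (by simp)).comp hr0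
  refine ⟨r, fun y hy => cschProfile_pos (hlt y hy), cschProfile_arsinh_zero,
    fun y hy => (contDiffAt_cschProfile (hlt y hy)).contDiffWithinAt, hr, hr0, fun φ => ?_⟩
  have hc := Complex.norm_exp_I_mul_ofReal φ
  refine ⟨(IsGinzburgLandauSolution.ofReal hr hs).const_mul hc, ?_, ?_, ?_, ?_,
    fun y _ => im_mul_ofReal_mul_conj_mul_ofReal _ _ _, fun y _ => energy_eq_zero_of_norm_eq_one hc _⟩
  · simp [r, cschProfile_arsinh_zero, div_eq_mul_inv]
  · simp only [r, cschProfile_arsinh_zero, sqrt_energy_one_half]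
    push_cast
    ring
  · simpa using (Complex.continuous_ofReal.tendsto' 0 0 rfl |>.comp hr0).const_mul _
  · simpa using (Complex.continuous_ofReal.tendsto' 0 0 rfl |>.comp hs0).const_mul _
end

section
/- For each κ ∈ ℝ with κ² < 1/3, set β := √(1−3κ²). Then the pair a_d(y;κ) = (√2·κ + iβ·tanh(β y/√2)) e^{iκy} and b_d(y;κ) := ∂_y a_d(y;κ) solves the system a' = b, b' = −a + a|a|² on all of ℝ. -/
/-! Writing `a = u e^{iκy}`, the equation `a'' = -a + a|a|²` becomes
`u'' + 2iκu' - κ²u = -u + u|u|²`, because `|e^{iκy}| = 1`. For the kink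
`u = √2 κ + iβ tanh(cy)` one has `u' = iβc(1 - tanh²)`, `u'' = -2iβc² tanh (1 - tanh²)` and
`|u|² = 2κ² + β² tanh²`, so the amplitude equation is a polynomial identity in `tanh(cy)`; it
holds because `2c² = β²` and `β² = 1 - 3κ²`. -/

open Complex

theorem Real.hasDerivAt_tanh (x : ℝ) : HasDerivAt Real.tanh (1 - Real.tanh x ^ 2) x := by
  have hcosh : Real.cosh x ≠ 0 := (Real.cosh_pos x).ne'
  rw [show Real.tanh = fun x => Real.sinh x / Real.cosh x from funext Real.tanh_eq_sinh_div_cosh]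
  refine ((Real.hasDerivAt_sinh x).div (Real.hasDerivAt_cosh x) hcosh).congr_deriv ?_
  field_simp

theorem hasDerivAt_tanh_mul (c y : ℝ) :
    HasDerivAt (fun y => Real.tanh (c * y)) (c * (1 - Real.tanh (c * y) ^ 2)) y :=
  ((Real.hasDerivAt_tanh (c * y)).comp y ((hasDerivAt_id y).const_mul c)).congr_deriv
    (by simp [mul_comm])

theorem hasDerivAt_mul_one_sub_tanh_mul_sq (c y : ℝ) :
    HasDerivAt (fun y => c * (1 - Real.tanh (c * y) ^ 2))
      (-2 * c ^ 2 * Real.tanh (c * y) * (1 - Real.tanh (c * y) ^ 2)) y :=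
  ((((hasDerivAt_tanh_mul c y).pow 2).const_sub 1).const_mul c).congr_deriv (by push_cast; ring)

theorem HasDerivAt.mul_cexp_I_mul {u : ℝ → ℂ} {u' : ℂ} {y : ℝ} (κ : ℝ)
    (hu : HasDerivAt u u' y) :
    HasDerivAt (fun y : ℝ => u y * cexp (I * κ * y))
      ((u' + I * κ * u y) * cexp (I * κ * y)) y := by
  have hphase : HasDerivAt (fun y : ℝ => I * κ * y) (I * κ) y := by
    simpa using (hasDerivAt_id (y : ℂ)).comp_ofReal.const_mul (I * κ)
  exact (hu.mul hphase.cexp).congr_deriv (by ring)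

theorem norm_mul_cexp_I_mul (z : ℂ) (κ y : ℝ) : ‖z * cexp (I * κ * y)‖ = ‖z‖ := by
  rw [norm_mul, mul_assoc, ← ofReal_mul, norm_exp_I_mul_ofReal, mul_one]

theorem ginzburgLandau_of_eq_mul_cexp_I_mul {u u' u'' a : ℝ → ℂ} (σ : ℂ) (κ : ℝ)
    (hu : ∀ y, HasDerivAt u (u' y) y) (hu' : ∀ y, HasDerivAt u' (u'' y) y)
    (hamp : ∀ y, u'' y + 2 * I * κ * u' y - κ ^ 2 * u y = σ * u y + u y * ‖u y‖ ^ 2)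
    (ha : ∀ y, a y = u y * cexp (I * κ * y)) (y : ℝ) :
    HasDerivAt a (deriv a y) y ∧ HasDerivAt (deriv a) (σ * a y + a y * ‖a y‖ ^ 2) y := by
  obtain rfl : a = fun y => u y * cexp (I * κ * y) := funext ha
  have hda : ∀ y, HasDerivAt (fun y : ℝ => u y * cexp (I * κ * y))
      ((u' y + I * κ * u y) * cexp (I * κ * y)) y := fun y => (hu y).mul_cexp_I_mul κ
  refine ⟨(hda y).differentiableAt.hasDerivAt, ?_⟩
  rw [funext fun y => (hda y).deriv]
  refine (((hu' y).add ((hu y).const_mul (I * κ))).mul_cexp_I_mul κ).congr_deriv ?_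
  rw [Pi.add_apply, norm_mul_cexp_I_mul]
  linear_combination cexp (I * κ * y) * hamp y + κ ^ 2 * u y * cexp (I * κ * y) * I_sq

section Defect

variable (κ : ℝ)

noncomputable def defectDepth : ℝ := √(1 - 3 * κ ^ 2)

noncomputable def defectRate : ℝ := defectDepth κ / √2

noncomputable def defectAmplitude (y : ℝ) : ℂ :=
  (√2 * κ : ℝ) + I * defectDepth κ * Real.tanh (defectRate κ * y)

theorem hasDerivAt_defectAmplitude (y : ℝ) :
    HasDerivAt (defectAmplitude κ)
      (I * defectDepth κ * (defectRate κ * (1 - Real.tanh (defectRate κ * y) ^ 2) : ℝ)) y :=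
  ((hasDerivAt_tanh_mul _ y).ofReal_comp.const_mul _).const_add _

theorem hasDerivAt_deriv_defectAmplitude (y : ℝ) :
    HasDerivAt (fun y => I * defectDepth κ *
        (defectRate κ * (1 - Real.tanh (defectRate κ * y) ^ 2) : ℝ))
      (I * defectDepth κ * (-2 * defectRate κ ^ 2 * Real.tanh (defectRate κ * y) *
        (1 - Real.tanh (defectRate κ * y) ^ 2) : ℝ)) y :=
  (hasDerivAt_mul_one_sub_tanh_mul_sq _ y).ofReal_comp.const_mul _

theorem defectDepth_sq {κ : ℝ} (hκ : κ ^ 2 ≤ 1 / 3) : defectDepth κ ^ 2 = 1 - 3 * κ ^ 2 :=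
  Real.sq_sqrt (by linarith)

theorem two_mul_defectRate : 2 * defectRate κ = √2 * defectDepth κ := by
  rw [defectRate]
  field_simp
  rw [Real.sq_sqrt zero_le_two, mul_comm]

theorem two_mul_defectRate_sq : 2 * defectRate κ ^ 2 = defectDepth κ ^ 2 := by
  rw [defectRate, div_pow, Real.sq_sqrt zero_le_two]
  ring

theorem sq_norm_defectAmplitude (y : ℝ) :
    ‖defectAmplitude κ y‖ ^ 2
      = 2 * κ ^ 2 + defectDepth κ ^ 2 * Real.tanh (defectRate κ * y) ^ 2 := by
  rw [defectAmplitude, Complex.sq_norm, normSq_apply]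
  simp only [add_re, add_im, mul_re, mul_im, ofReal_re, ofReal_im, I_re, I_im]
  linear_combination κ ^ 2 * Real.sq_sqrt zero_le_two

theorem defectAmplitude_equation {κ : ℝ} (hκ : κ ^ 2 ≤ 1 / 3) (y : ℝ) :
    let t := Real.tanh (defectRate κ * y)
    I * defectDepth κ * (-2 * defectRate κ ^ 2 * t * (1 - t ^ 2) : ℝ)
      + 2 * I * κ * (I * defectDepth κ * (defectRate κ * (1 - t ^ 2) : ℝ))
      - κ ^ 2 * defectAmplitude κ y
      = -1 * defectAmplitude κ y + defectAmplitude κ y * ‖defectAmplitude κ y‖ ^ 2 := by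
  intro t
  have hnorm : (‖defectAmplitude κ y‖ : ℂ) ^ 2
      = (2 * κ ^ 2 + defectDepth κ ^ 2 * t ^ 2 : ℝ) := by
    exact_mod_cast sq_norm_defectAmplitude κ y
  have hu : defectAmplitude κ y = (√2 * κ : ℝ) + I * defectDepth κ * t := rfl
  clear_value t
  have hdepth : (defectDepth κ : ℂ) ^ 2 = 1 - 3 * (κ : ℂ) ^ 2 := by
    exact_mod_cast defectDepth_sq hκ
  have hrate : 2 * (defectRate κ : ℂ) = √2 * defectDepth κ := by
    exact_mod_cast two_mul_defectRate κ
  have hrate_sq : 2 * (defectRate κ : ℂ) ^ 2 = defectDepth κ ^ 2 := by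
    exact_mod_cast two_mul_defectRate_sq κ
  rw [hnorm, hu]
  push_cast
  set β : ℂ := (defectDepth κ : ℂ)
  set c : ℂ := (defectRate κ : ℂ)
  linear_combination 2 * κ * β * c * (1 - t ^ 2) * I_sq - I * β * t * (1 - t ^ 2) * hrate_sq
    - κ * β * (1 - t ^ 2) * hrate - (√2 * κ + I * β * t) * hdepth

end Defect

/-- **Defect solutions of the real Ginzburg–Landau system with σ = −1.**
For κ² < 1/3 and β = √(1−3κ²), the pair a_d(y) = (√2 κ + iβ tanh(βy/√2)) e^{iκy},
b_d := a_d' solves a' = b, b' = −a + a|a|² on all of ℝ. -/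
theorem ginzburg_landau_defect_solutions (κ : ℝ) (hκ : κ ^ 2 < 1 / 3) :
    let β : ℝ := Real.sqrt (1 - 3 * κ ^ 2)
    let a : ℝ → ℂ := fun y =>
      ((Real.sqrt 2 * κ : ℝ) + Complex.I * (β : ℂ) * (Real.tanh (β * y / Real.sqrt 2) : ℂ)) *
        Complex.exp (Complex.I * κ * y)
    let b : ℝ → ℂ := deriv a
    ∀ y : ℝ, HasDerivAt a (b y) y ∧
      HasDerivAt b (-(a y) + a y * ((‖a y‖ : ℂ)) ^ 2) y := by
  intro β a b y
  have ha : ∀ y, a y = defectAmplitude κ y * cexp (I * κ * y) := fun y => by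
    simp only [a, β, defectAmplitude, defectRate, defectDepth, div_mul_eq_mul_div]
  obtain ⟨hab, hb⟩ := ginzburgLandau_of_eq_mul_cexp_I_mul (-1) κ
    (hasDerivAt_defectAmplitude κ) (hasDerivAt_deriv_defectAmplitude κ)
    (defectAmplitude_equation hκ.le) ha y
  exact ⟨hab, hb.congr_deriv (by rw [neg_one_mul])⟩
end

section
/- Identify ℂ² with ℝ⁴ via (a,b) ↦ (Re a, Im a, Re b, Im b), and define the smooth functions M, H⁺, H⁻: ℝ⁴ → ℝ by M(a,b) = Im(a·conj(b)) and H^±(a,b) = |b|² ± |a|² − (1/2)|a|⁴. Then for every φ ∈ ℝ, at the point p_φ = (e^{iφ}/2, e^{iφ}·3/(4√2)) ∈ ℂ² ≅ ℝ⁴, the gradients ∇M(p_φ) and ∇H⁻(p_φ) are linearly independent, and the gradients ∇M(p_φ) and ∇H⁺(p_φ) are linearly independent. -/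
/-!
In coordinates `p = (x₀, x₁, x₂, x₃)` one has `∇M = (-x₃, x₂, x₁, -x₀)` and
`∇H = (2x₀(ε - |a|²), 2x₁(ε - |a|²), 2x₂, 2x₃)` for `H = |b|² + ε|a|² - |a|⁴/2`, so that
`∇M · ∇H = 2 M (1 + ε - |a|²)`. At `p_φ` both `a` and `b` are real multiples of `e^{iφ}`, hence
`M(p_φ) = 0` and the two gradients are orthogonal; both are nonzero because `b ≠ 0`.
-/

noncomputable section

theorem linearIndependent_pair_of_dotProduct_eq_zero {K n : Type*} [Field K] [LinearOrder K]
    [IsStrictOrderedRing K] [Fintype n] {u v : n → K} (hu : u ≠ 0) (hv : v ≠ 0)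
    (huv : u ⬝ᵥ v = 0) : LinearIndependent K ![u, v] := by
  refine (LinearIndependent.pair_iff' hu).2 fun a hav => hv ?_
  rw [← hav, dotProduct_smul, smul_eq_mul, mul_eq_zero] at huv
  rw [← hav, huv.resolve_right (dotProduct_self_eq_zero.not.2 hu), zero_smul]

section CoordinateGradient

variable {ι : Type*} [DecidableEq ι]

def coordGrad (f : (ι → ℝ) → ℝ) (p : ι → ℝ) : ι → ℝ :=
  fun j => deriv (fun t => f (Function.update p j t)) (p j)

theorem hasDerivAt_update_apply (p : ι → ℝ) (j k : ι) :
    HasDerivAt (fun t => Function.update p j t k) ((Pi.single j 1 : ι → ℝ) k) (p j) :=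
  hasDerivAt_pi.1 (hasDerivAt_update p j (p j)) k

end CoordinateGradient

def momentum (v : Fin 4 → ℝ) : ℝ := v 1 * v 2 - v 0 * v 3

def hamiltonian (ε : ℝ) (v : Fin 4 → ℝ) : ℝ :=
  v 2 ^ 2 + v 3 ^ 2 + ε * (v 0 ^ 2 + v 1 ^ 2) - 1 / 2 * (v 0 ^ 2 + v 1 ^ 2) ^ 2

theorem coordGrad_momentum (p : Fin 4 → ℝ) :
    coordGrad momentum p = ![-p 3, p 2, p 1, -p 0] := by
  funext j
  have hx := hasDerivAt_update_apply p j
  have := ((hx 1).mul (hx 2)).sub ((hx 0).mul (hx 3))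
  refine this.deriv.trans ?_
  fin_cases j <;> simp

theorem coordGrad_hamiltonian (ε : ℝ) (p : Fin 4 → ℝ) :
    coordGrad (hamiltonian ε) p =
      ![2 * p 0 * (ε - (p 0 ^ 2 + p 1 ^ 2)), 2 * p 1 * (ε - (p 0 ^ 2 + p 1 ^ 2)),
        2 * p 2, 2 * p 3] := by
  funext j
  have hx := hasDerivAt_update_apply p j
  have hA := ((hx 0).pow 2).add ((hx 1).pow 2)
  have := ((((hx 2).pow 2).add ((hx 3).pow 2)).add (hA.const_mul ε)).sub
    ((hA.pow 2).const_mul (1 / 2))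
  refine this.deriv.trans ?_
  fin_cases j <;> simp <;> ring

theorem momentum_eq_im_mul_conj (v : Fin 4 → ℝ) :
    momentum v = ((v 0 + v 1 * Complex.I) * starRingEnd ℂ (v 2 + v 3 * Complex.I)).im := by
  simp only [momentum, map_add, map_mul, Complex.conj_ofReal, Complex.conj_I, mul_neg,
    Complex.mul_im, Complex.add_re, Complex.ofReal_re, Complex.mul_re, Complex.I_re, mul_zero,
    Complex.ofReal_im, Complex.I_im, mul_one, sub_self, add_zero, Complex.add_im, Complex.neg_im,
    zero_add, Complex.neg_re, neg_zero]
  ring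

theorem hamiltonian_eq_norm (ε : ℝ) (v : Fin 4 → ℝ) :
    hamiltonian ε v = ‖(v 2 : ℂ) + v 3 * Complex.I‖ ^ 2 + ε * ‖(v 0 : ℂ) + v 1 * Complex.I‖ ^ 2
      - 1 / 2 * (‖(v 0 : ℂ) + v 1 * Complex.I‖ ^ 2) ^ 2 := by
  simp only [hamiltonian, Complex.sq_norm, Complex.normSq_add_mul_I]

theorem dotProduct_coordGrad_momentum_hamiltonian (ε : ℝ) (p : Fin 4 → ℝ) :
    coordGrad momentum p ⬝ᵥ coordGrad (hamiltonian ε) p =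
      2 * momentum p * (1 + ε - (p 0 ^ 2 + p 1 ^ 2)) := by
  rw [coordGrad_momentum, coordGrad_hamiltonian]
  simp only [dotProduct, Fin.sum_univ_four, Matrix.cons_val_zero, Matrix.cons_val_one,
    Matrix.cons_val, momentum]
  ring

theorem linearIndependent_coordGrad_momentum_hamiltonian (ε : ℝ) {p : Fin 4 → ℝ}
    (hM : momentum p = 0) (hb : p 2 ≠ 0 ∨ p 3 ≠ 0) :
    LinearIndependent ℝ ![coordGrad momentum p, coordGrad (hamiltonian ε) p] := by
  refine linearIndependent_pair_of_dotProduct_eq_zero ?_ ?_ ?_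
  · rw [coordGrad_momentum, Function.ne_iff]
    exact hb.elim (fun h => ⟨1, by simpa using h⟩) (fun h => ⟨0, by simpa using h⟩)
  · rw [coordGrad_hamiltonian, Function.ne_iff]
    exact hb.elim (fun h => ⟨2, by simpa using h⟩) (fun h => ⟨3, by simpa using h⟩)
  · rw [dotProduct_coordGrad_momentum_hamiltonian, hM, mul_zero, zero_mul]

end

/-- **Linear independence of the gradients of the conserved quantities.**
Identifying ℂ² ≅ ℝ⁴ via (a,b) ↦ (Re a, Im a, Re b, Im b), with
M(a,b) = Im(a·conj b) and H^±(a,b) = |b|² ± |a|² − (1/2)|a|⁴, at each point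
p_φ = (e^{iφ}/2, e^{iφ}·3/(4√2)) the gradients ∇M and ∇H⁻ are linearly
independent, and likewise ∇M and ∇H⁺. -/
theorem gradients_linearly_independent (φ : ℝ) :
    let toC : (Fin 4 → ℝ) → ℂ × ℂ := fun v =>
      ((v 0 : ℂ) + (v 1 : ℂ) * Complex.I, (v 2 : ℂ) + (v 3 : ℂ) * Complex.I)
    let Mf : (Fin 4 → ℝ) → ℝ := fun v => ((toC v).1 * (starRingEnd ℂ) (toC v).2).im
    let Hp : (Fin 4 → ℝ) → ℝ := fun v =>
      ‖(toC v).2‖ ^ 2 + ‖(toC v).1‖ ^ 2 - (1 / 2) * ‖(toC v).1‖ ^ 4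
    let Hm : (Fin 4 → ℝ) → ℝ := fun v =>
      ‖(toC v).2‖ ^ 2 - ‖(toC v).1‖ ^ 2 - (1 / 2) * ‖(toC v).1‖ ^ 4
    let grad : ((Fin 4 → ℝ) → ℝ) → (Fin 4 → ℝ) → (Fin 4 → ℝ) := fun f p j =>
      deriv (fun t => f (Function.update p j t)) (p j)
    let pφ : Fin 4 → ℝ :=
      ![Real.cos φ / 2, Real.sin φ / 2,
        3 * Real.cos φ / (4 * Real.sqrt 2), 3 * Real.sin φ / (4 * Real.sqrt 2)]
    LinearIndependent ℝ ![grad Mf pφ, grad Hm pφ] ∧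
    LinearIndependent ℝ ![grad Mf pφ, grad Hp pφ] := by
  intro toC Mf Hp Hm grad pφ
  have hMf : Mf = momentum := funext fun v => (momentum_eq_im_mul_conj v).symm
  have hHp : Hp = hamiltonian 1 := by
    funext v
    rw [hamiltonian_eq_norm]
    ring
  have hHm : Hm = hamiltonian (-1) := by
    funext v
    rw [hamiltonian_eq_norm]
    ring
  have hM : momentum pφ = 0 := by
    simp only [pφ, momentum, Matrix.cons_val_one, Matrix.cons_val_zero, Matrix.cons_val]
    ring
  have hb : pφ 2 ≠ 0 ∨ pφ 3 ≠ 0 := by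
    by_contra! h
    simp only [pφ, Matrix.cons_val, div_eq_zero_iff, mul_eq_zero, OfNat.ofNat_ne_zero, false_or,
      Nat.ofNat_nonneg, Real.sqrt_eq_zero, or_self, or_false] at h
    simpa [h] using Real.sin_sq_add_cos_sq φ
  rw [hMf, hHp, hHm]
  exact ⟨linearIndependent_coordGrad_momentum_hamiltonian (-1) hM hb,
    linearIndependent_coordGrad_momentum_hamiltonian 1 hM hb⟩
end

section
/- Let ε ∈ ℝ, let I ⊆ ℝ be an interval, and let (a,b): I → ℂ² be differentiable satisfying the truncated normal-form system a' = b + ε(−(i/4)a + (3i/8)a|a|²) and b' = −a + a|a|² + ε(−(i/4)b + (3i/8)b|a|² + (i/8)a(a·conj(b) − conj(a)·b)). Then the function y ↦ Im(a(y)·conj(b(y))) is constant on I. -/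
/-!
By the product rule, `M = Im (a * conj b)` has derivative `Im (a' * conj b + a * conj b')`.
Substituting the system, `a' * conj b + a * conj b'` becomes a polynomial in `a, conj a, b, conj b`,
`i` and the real quantities `ε, |a|` that is formally invariant under conjugation (swapping
`a ↔ conj a`, `b ↔ conj b`, `i ↔ -i`), hence real, so `M' = 0`. An interval is convex, and a
function with zero derivative on a convex set is constant there.
-/

theorem Convex.is_const_of_hasDerivAt_eq_zero {𝕜 G : Type*} [RCLike 𝕜] [NormedAddCommGroup G]
    [NormedSpace 𝕜 G] {f : 𝕜 → G} {s : Set 𝕜} (hs : Convex ℝ s)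
    (hf : ∀ x ∈ s, HasDerivAt f 0 x) {x y : 𝕜} (hx : x ∈ s) (hy : y ∈ s) : f x = f y := by
  have h := hs.norm_image_sub_le_of_norm_hasDerivWithin_le
    (fun t ht => (hf t ht).hasDerivWithinAt) (fun _ _ => norm_zero.le) hx hy
  rwa [zero_mul, norm_le_zero_iff, sub_eq_zero, eq_comm] at h

theorem HasDerivAt.im_mul_conj {f g : ℝ → ℂ} {f' g' : ℂ} {x : ℝ} (hf : HasDerivAt f f' x)
    (hg : HasDerivAt g g' x) :
    HasDerivAt (fun t => (f t * starRingEnd ℂ (g t)).im)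
      ((f' * starRingEnd ℂ (g x) + f x * starRingEnd ℂ g').im) x :=
  Complex.imCLM.hasFDerivAt.comp_hasDerivAt x (hf.mul hg.star)

namespace TruncatedNormalForm

noncomputable def rhsA (ε : ℝ) (u v : ℂ) : ℂ :=
  v + (ε : ℂ) * (-(Complex.I / 4) * u + (3 * Complex.I / 8) * u * ((‖u‖ : ℂ)) ^ 2)

noncomputable def rhsB (ε : ℝ) (u v : ℂ) : ℂ :=
  -u + u * ((‖u‖ : ℂ)) ^ 2
    + (ε : ℂ) * (-(Complex.I / 4) * v + (3 * Complex.I / 8) * v * ((‖u‖ : ℂ)) ^ 2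
      + (Complex.I / 8) * u * (u * starRingEnd ℂ v - starRingEnd ℂ u * v))

theorem im_rhsA_mul_conj_add_mul_conj_rhsB (ε : ℝ) (u v : ℂ) :
    (rhsA ε u v * starRingEnd ℂ v + u * starRingEnd ℂ (rhsB ε u v)).im = 0 := by
  rw [← Complex.conj_eq_iff_im, rhsA, rhsB]
  simp only [map_add, map_pow, map_sub, map_mul, map_neg, map_div₀, Complex.conj_conj,
    Complex.conj_I, Complex.conj_ofReal, map_ofNat]
  ring

end TruncatedNormalForm

/-- **Exact conservation of M = Im(a·conj b) in the truncated normal form.**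
If (a,b) : I → ℂ² is differentiable on an interval I and satisfies
a' = b + ε(−(i/4)a + (3i/8)a|a|²),
b' = −a + a|a|² + ε(−(i/4)b + (3i/8)b|a|² + (i/8)a(a·conj b − conj a·b)),
then y ↦ Im(a(y)·conj(b(y))) is constant on I. -/
theorem truncated_normal_form_M_conserved
    (ε : ℝ) (I : Set ℝ) (hI : I.OrdConnected)
    (a b : ℝ → ℂ)
    (ha : ∀ y ∈ I, HasDerivAt a
      (b y + (ε : ℂ) * (-(Complex.I / 4) * a y
        + (3 * Complex.I / 8) * a y * ((‖a y‖ : ℂ)) ^ 2)) y)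
    (hb : ∀ y ∈ I, HasDerivAt b
      (-(a y) + a y * ((‖a y‖ : ℂ)) ^ 2
        + (ε : ℂ) * (-(Complex.I / 4) * b y
          + (3 * Complex.I / 8) * b y * ((‖a y‖ : ℂ)) ^ 2
          + (Complex.I / 8) * a y *
            (a y * (starRingEnd ℂ) (b y) - (starRingEnd ℂ) (a y) * b y))) y) :
    ∀ y ∈ I, ∀ z ∈ I,
      (a y * (starRingEnd ℂ) (b y)).im = (a z * (starRingEnd ℂ) (b z)).im := by
  have hM : ∀ t ∈ I, HasDerivAt (fun t => (a t * starRingEnd ℂ (b t)).im) 0 t := fun t ht =>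
    ((ha t ht).im_mul_conj (hb t ht)).congr_deriv
      (TruncatedNormalForm.im_rhsA_mul_conj_add_mul_conj_rhsB ε (a t) (b t))
  exact fun y hy z hz => hI.convex.is_const_of_hasDerivAt_eq_zero hM hy hz
end

section
/- Consider, for (κ, r) ∈ ℝ × (0,∞) and parameters (φ, ε) ∈ ℝ × [0,∞), the system of two real equations: (E1) ε·(r²/2)(1 − cos 2φ) = −κ(1−κ²) + (ε/8)(7κ⁴ − 4κ² + 1); (E2) 2r² + ε·r·√(r² + r⁴/2)·sin 2φ + ε²(1 − cos 2φ)(r² + r⁴/8) = (1/2)(1−κ²)(1+3κ²) + (ε/2)·κ·(−4κ⁴ + 3κ² − 1). Then there exist ε₀ > 0, C > 0, and continuous functions κ, r: ℝ × [0,ε₀) → ℝ, 2π-periodic in φ, such that κ(φ,0) = 0 and r(φ,0) = 1/2, the pair (κ(φ,ε), r(φ,ε)) satisfies (E1) and (E2) for all (φ,ε) ∈ ℝ × [0,ε₀), and |κ(φ,ε) − (ε/8)·cos 2φ| ≤ C ε² for all φ ∈ ℝ and ε ∈ [0,ε₀). -/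
/-!
At `ε = 0` the system reduces to `κ³ = κ`, `2r² = (1 - κ²)(1 + 3κ²)/2`, solved by
`(κ, r) = (0, 1/2)`. For `ε ∈ [0, 1/100]`, with `c = cos 2φ` and `s = sin 2φ` as independent
parameters, the chord iteration `x ↦ x - diag(1, 1/2) (E1, E2)(x)` is a `1/2`-contraction of the
box `|κ| ≤ 1/10`, `2/5 ≤ r ≤ 3/5`: each of its components is a function of `κ` plus a function of
`r`, each with Lipschitz constant `1/4`. Banach's fixed point theorem gives the branch; it is
continuous because the contraction constant is uniform in the parameters, and `2π`-periodic
because only `cos 2φ` and `sin 2φ` enter. On the branch (E1) gives `|κ| ≤ ε`, then (E2) gives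
`|2r² - 1/2| ≤ ε`, and rewriting (E1) as
`κ - (ε/8) cos 2φ = κ³ + (ε/8)(7κ⁴ - 4κ²) - (ε/4)(2r² - 1/2)(1 - cos 2φ)` gives the `O(ε²)` bound.
-/

open Filter Set Topology

theorem ContractingWith.continuous_fixedPoint {P X : Type*} [TopologicalSpace P] [MetricSpace X]
    [CompleteSpace X] [Nonempty X] {K : NNReal} {T : P → X → X}
    (hT : ∀ p, ContractingWith K (T p)) (hcont : ∀ x, Continuous fun p => T p x) :
    Continuous fun p => fixedPoint (T p) (hT p) := by
  refine continuous_iff_continuousAt.2 fun p₀ => ?_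
  set x₀ := fixedPoint (T p₀) (hT p₀)
  have hbound : ∀ p, dist (fixedPoint (T p) (hT p)) x₀ ≤ dist x₀ (T p x₀) / (1 - K) :=
    fun p => (dist_comm _ _).le.trans ((hT p).dist_fixedPoint_le x₀)
  have hlim : Tendsto (fun p => dist x₀ (T p x₀) / (1 - K)) (𝓝 p₀) (𝓝 0) := by
    have h := ((hcont x₀).tendsto p₀).dist (tendsto_const_nhds (x := x₀))
    rw [(hT p₀).fixedPoint_isFixedPt, dist_self] at h
    simpa [dist_comm] using h.div_const (1 - (K : ℝ))
  exact tendsto_iff_dist_tendsto_zero.2 (squeeze_zero (fun _ => dist_nonneg) hbound hlim)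

lemma abs_sub_mul_le_abs_sq_sub {x y m : ℝ} (hm : 0 ≤ m) (hx : m ≤ x) (hy : m ≤ y) :
    |x - y| * (2 * m) ≤ |x ^ 2 - y ^ 2| := by
  rw [show x ^ 2 - y ^ 2 = (x - y) * (x + y) by ring, abs_mul,
    abs_of_nonneg (by linarith : 0 ≤ x + y)]
  gcongr
  linarith

namespace StrainDisplacement

noncomputable section

/- (E1) and (E2) as left side minus right side, with `c`, `s` in place of `cos 2φ`, `sin 2φ`. -/
def residual₁ (e c k r : ℝ) : ℝ :=
  e * (r ^ 2 / 2) * (1 - c) - (-k * (1 - k ^ 2) + (e / 8) * (7 * k ^ 4 - 4 * k ^ 2 + 1))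

def residual₂ (e c s k r : ℝ) : ℝ :=
  (2 * r ^ 2 + e * r * √(r ^ 2 + r ^ 4 / 2) * s + e ^ 2 * (1 - c) * (r ^ 2 + r ^ 4 / 8))
    - ((1 / 2) * (1 - k ^ 2) * (1 + 3 * k ^ 2) + (e / 2) * k * (-4 * k ^ 4 + 3 * k ^ 2 - 1))

def params : Set (ℝ × ℝ × ℝ) := Icc 0 (1/100) ×ˢ (Icc (-1) 1 ×ˢ Icc (-1) 1)

def box : Set (ℝ × ℝ) := Icc (-(1/10)) (1/10) ×ˢ Icc (2/5) (3/5)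

/-- One step of the chord iteration for `residual₁ = residual₂ = 0`, using the Jacobian
`diag(1, 2)` of the residuals at the unperturbed solution `(0, 1/2)`. -/
def chordMap (e c s : ℝ) (x : ℝ × ℝ) : ℝ × ℝ :=
  (x.1 - residual₁ e c x.1 x.2, x.2 - residual₂ e c s x.1 x.2 / 2)

def kPart₁ (e k : ℝ) : ℝ := k ^ 3 + e / 8 * (7 * k ^ 4 - 4 * k ^ 2 + 1)

def rPart₁ (e c r : ℝ) : ℝ := e * (r ^ 2 / 2) * (1 - c)

def kPart₂ (e k : ℝ) : ℝ :=
  (1 - k ^ 2) * (1 + 3 * k ^ 2) / 4 + e / 4 * k * (-4 * k ^ 4 + 3 * k ^ 2 - 1)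

def rPart₂ (e c s r : ℝ) : ℝ :=
  r - r ^ 2 - e * r * √(r ^ 2 + r ^ 4 / 2) * s / 2 - e ^ 2 * (1 - c) * (r ^ 2 + r ^ 4 / 8) / 2

lemma chordMap_apply (e c s k r : ℝ) :
    chordMap e c s (k, r) = (kPart₁ e k - rPart₁ e c r, kPart₂ e k + rPart₂ e c s r) := by
  simp only [chordMap, residual₁, residual₂, kPart₁, rPart₁, kPart₂, rPart₂, Prod.mk.injEq]
  constructor <;> ring

section Estimates

variable {e c s k r r' : ℝ}

lemma mul_sqrt_mem_Icc (hr : r ∈ Icc (2/5 : ℝ) (3/5)) :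
    r * √(r ^ 2 + r ^ 4 / 2) ∈ Icc (4/25 : ℝ) (1/2) := by
  obtain ⟨h0, h1⟩ := hr
  have hq0 : 2/5 ≤ √(r ^ 2 + r ^ 4 / 2) :=
    Real.le_sqrt_of_sq_le (by nlinarith [sq_nonneg (r ^ 2)])
  have hq1 : √(r ^ 2 + r ^ 4 / 2) ≤ 7/10 := by
    rw [Real.sqrt_le_left (by norm_num)]
    have : r ^ 2 ≤ 9/25 := by nlinarith
    nlinarith
  constructor <;> nlinarith

lemma abs_mul_sqrt_sub_le (hr : r ∈ Icc (2/5 : ℝ) (3/5)) (hr' : r' ∈ Icc (2/5 : ℝ) (3/5)) :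
    |r * √(r ^ 2 + r ^ 4 / 2) - r' * √(r' ^ 2 + r' ^ 4 / 2)| ≤ 4 * |r - r'| := by
  have hsq (t : ℝ) : (t * √(t ^ 2 + t ^ 4 / 2)) ^ 2 = t ^ 4 + t ^ 6 / 2 := by
    rw [mul_pow, Real.sq_sqrt (by positivity)]; ring
  have h := abs_sub_mul_le_abs_sq_sub (by norm_num) (mul_sqrt_mem_Icc hr).1
    (mul_sqrt_mem_Icc hr').1
  set q := (r + r') * (r ^ 2 + r' ^ 2) + (r ^ 5 + r ^ 4 * r' + r ^ 3 * r' ^ 2 + r ^ 2 * r' ^ 3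
    + r * r' ^ 4 + r' ^ 5) / 2 with hq_def
  rw [hsq, hsq, show r ^ 4 + r ^ 6 / 2 - (r' ^ 4 + r' ^ 6 / 2) = (r - r') * q by ring,
    abs_mul] at h
  obtain ⟨a0, a1⟩ := hr
  obtain ⟨b0, b1⟩ := hr'
  have hq : |q| ≤ 6/5 := by
    rw [abs_of_nonneg (by positivity), hq_def]
    refine le_trans (b := (3/5 + 3/5) * ((3/5) ^ 2 + (3/5) ^ 2) + ((3/5) ^ 5 + (3/5) ^ 4 * (3/5)
      + (3/5) ^ 3 * (3/5) ^ 2 + (3/5) ^ 2 * (3/5) ^ 3 + (3/5) * (3/5) ^ 4 + (3/5) ^ 5) / 2)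
      ?_ (by norm_num)
    gcongr
  nlinarith [abs_nonneg (r - r'),
    abs_nonneg (r * √(r ^ 2 + r ^ 4 / 2) - r' * √(r' ^ 2 + r' ^ 4 / 2))]

variable (he : e ∈ Icc (0 : ℝ) (1/100)) (hc : c ∈ Icc (-1 : ℝ) 1) (hs : s ∈ Icc (-1 : ℝ) 1)
  (hk : k ∈ Icc (-(1/10) : ℝ) (1/10)) (hr : r ∈ Icc (2/5 : ℝ) (3/5))
include he

include hk in
lemma div_eight_mul_mem_Icc : e / 8 * (7 * k ^ 4 - 4 * k ^ 2 + 1) ∈ Icc 0 (e / 4) := by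
  obtain ⟨he0, -⟩ := he
  obtain ⟨hk0, hk1⟩ := hk
  have hk2 : k ^ 2 ≤ 1/100 := by nlinarith
  have h0 : 0 ≤ 7 * k ^ 4 - 4 * k ^ 2 + 1 := by nlinarith [sq_nonneg (k ^ 2)]
  have h1 : 7 * k ^ 4 - 4 * k ^ 2 + 1 ≤ 2 := by nlinarith [sq_nonneg k]
  exact ⟨by positivity, by nlinarith [mul_le_mul_of_nonneg_left h1 he0]⟩

include hc hr in
lemma mul_sq_div_two_mul_mem_Icc : e * (r ^ 2 / 2) * (1 - c) ∈ Icc 0 (e / 2) := by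
  obtain ⟨he0, -⟩ := he
  obtain ⟨hc0, hc1⟩ := hc
  obtain ⟨hr0, hr1⟩ := hr
  have h1c : 0 ≤ 1 - c := by linarith
  refine ⟨by positivity, ?_⟩
  calc e * (r ^ 2 / 2) * (1 - c) ≤ e * ((3/5) ^ 2 / 2) * 2 := by gcongr; linarith
    _ ≤ e / 2 := by linarith

include hs hr in
lemma abs_mul_mul_sqrt_mul_le : |e * r * √(r ^ 2 + r ^ 4 / 2) * s| ≤ e / 2 := by
  obtain ⟨hρ0, hρ1⟩ := mul_sqrt_mem_Icc hr
  rw [mul_assoc e, abs_mul, abs_mul, abs_of_nonneg he.1, abs_of_nonneg (by linarith)]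
  have := abs_le.2 hs
  have := he.1
  calc e * (r * √(r ^ 2 + r ^ 4 / 2)) * |s| ≤ e * (1/2) * 1 := by gcongr
    _ = e / 2 := by ring

include hk in
lemma abs_div_two_mul_mul_le : |e / 2 * k * (-4 * k ^ 4 + 3 * k ^ 2 - 1)| ≤ e / 10 := by
  obtain ⟨hk0, hk1⟩ := hk
  have h : |k * (-4 * k ^ 4 + 3 * k ^ 2 - 1)| ≤ 1/5 := by
    have hk2 : k ^ 2 ≤ 1/100 := by nlinarith
    have hP : |-4 * k ^ 4 + 3 * k ^ 2 - 1| ≤ 2 := by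
      rw [abs_le]; constructor <;> nlinarith [sq_nonneg (k ^ 2), sq_nonneg k]
    rw [abs_mul]
    calc |k| * |-4 * k ^ 4 + 3 * k ^ 2 - 1| ≤ (1/10) * 2 := by
          gcongr; exact abs_le.2 ⟨hk0, hk1⟩
      _ = 1/5 := by norm_num
  rw [mul_assoc, abs_mul, abs_of_nonneg (by linarith [he.1])]
  nlinarith [he.1]

include hc hr in
lemma sq_mul_mem_Icc : e ^ 2 * (1 - c) * (r ^ 2 + r ^ 4 / 8) ∈ Icc 0 (e / 100) := by
  obtain ⟨he0, he1⟩ := he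
  obtain ⟨hc0, hc1⟩ := hc
  obtain ⟨hr0, hr1⟩ := hr
  have h1c : 0 ≤ 1 - c := by linarith
  refine ⟨by positivity, ?_⟩
  calc e ^ 2 * (1 - c) * (r ^ 2 + r ^ 4 / 8)
      ≤ (e * (1/100)) * 2 * ((3/5) ^ 2 + (3/5) ^ 4 / 8) := by
        rw [sq]; gcongr; linarith
    _ ≤ e / 100 := by nlinarith

end Estimates

lemma mapsTo_chordMap {e c s : ℝ} (hp : (e, c, s) ∈ params) :
    MapsTo (chordMap e c s) box box := by
  rintro ⟨k, r⟩ ⟨hk : k ∈ Icc _ _, hr : r ∈ Icc _ _⟩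
  obtain ⟨he : e ∈ Icc _ _, hc : c ∈ Icc _ _, hs : s ∈ Icc _ _⟩ := hp
  have h₁ := div_eight_mul_mem_Icc he hk
  have h₂ := mul_sq_div_two_mul_mem_Icc he hc hr
  have h₃ := abs_le.1 (abs_mul_mul_sqrt_mul_le he hs hr)
  have h₄ := abs_le.1 (abs_div_two_mul_mul_le he hk)
  have h₅ := sq_mul_mem_Icc he hc hr
  obtain ⟨he0, he1⟩ := he
  obtain ⟨hk0, hk1⟩ := hk
  obtain ⟨hr0, hr1⟩ := hr
  have hk3 : |k ^ 3| ≤ 1/1000 := by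
    rw [abs_pow]
    calc |k| ^ 3 ≤ (1/10) ^ 3 := by gcongr; exact abs_le.2 ⟨hk0, hk1⟩
      _ = 1/1000 := by norm_num
  have hk2 : k ^ 2 ≤ 1/100 := by nlinarith
  have hk4 : k ^ 4 ≤ 1/10000 := by nlinarith
  have hrr : 6/25 ≤ r - r ^ 2 ∧ r - r ^ 2 ≤ 1/4 :=
    ⟨by nlinarith, by nlinarith [sq_nonneg (r - 1/2)]⟩
  simp only [chordMap, residual₁, residual₂, box, mem_prod, mem_Icc] at *
  refine ⟨⟨?_, ?_⟩, ?_, ?_⟩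
  · linarith [abs_le.1 hk3]
  · linarith [abs_le.1 hk3]
  · linarith [sq_nonneg k]
  · linarith [sq_nonneg (k ^ 2)]

section Lipschitz

variable {e c s k r k' r' : ℝ} (he : e ∈ Icc (0 : ℝ) (1/100))

include he

lemma abs_kPart₁_sub_le (hk : k ∈ Icc (-(1/10) : ℝ) (1/10))
    (hk' : k' ∈ Icc (-(1/10) : ℝ) (1/10)) :
    |kPart₁ e k - kPart₁ e k'| ≤ 1/4 * |k - k'| := by
  obtain ⟨hk0, hk1⟩ := hk
  obtain ⟨hk0', hk1'⟩ := hk'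
  rw [show kPart₁ e k - kPart₁ e k' = (k ^ 2 + k * k' + k' ^ 2
      + e / 8 * ((k + k') * (7 * (k ^ 2 + k' ^ 2) - 4))) * (k - k') by unfold kPart₁; ring,
    abs_mul]
  gcongr
  have h₁ : |(k + k') * (7 * (k ^ 2 + k' ^ 2) - 4)| ≤ 1 := by
    rw [abs_le]; constructor <;> nlinarith
  have h₂ := abs_le.1 (show |e / 8 * ((k + k') * (7 * (k ^ 2 + k' ^ 2) - 4))| ≤ 1/800 by
    rw [abs_mul, abs_of_nonneg (by linarith [he.1])]
    exact (mul_le_mul_of_nonneg_left h₁ (by linarith [he.1])).trans (by linarith [he.2]))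
  rw [abs_le]; constructor <;> nlinarith

lemma abs_rPart₁_sub_le (hc : c ∈ Icc (-1 : ℝ) 1) (hr : r ∈ Icc (2/5 : ℝ) (3/5))
    (hr' : r' ∈ Icc (2/5 : ℝ) (3/5)) :
    |rPart₁ e c r - rPart₁ e c r'| ≤ 1/4 * |r - r'| := by
  obtain ⟨he0, he1⟩ := he
  obtain ⟨hc0, hc1⟩ := hc
  obtain ⟨hr0, hr1⟩ := hr
  obtain ⟨hr0', hr1'⟩ := hr'
  rw [show rPart₁ e c r - rPart₁ e c r' = e / 2 * ((1 - c) * (r + r')) * (r - r') by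
    unfold rPart₁; ring, abs_mul]
  gcongr
  have : 0 ≤ 1 - c := by linarith
  have : 0 ≤ r + r' := by linarith
  rw [abs_of_nonneg (by positivity)]
  calc e / 2 * ((1 - c) * (r + r')) ≤ (1/100) / 2 * (2 * (3/5 + 3/5)) := by
        gcongr; linarith
    _ ≤ 1/4 := by norm_num

lemma abs_kPart₂_sub_le (hk : k ∈ Icc (-(1/10) : ℝ) (1/10))
    (hk' : k' ∈ Icc (-(1/10) : ℝ) (1/10)) :
    |kPart₂ e k - kPart₂ e k'| ≤ 1/4 * |k - k'| := by
  obtain ⟨hk0, hk1⟩ := hk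
  obtain ⟨hk0', hk1'⟩ := hk'
  rw [show kPart₂ e k - kPart₂ e k' = ((k + k') * (2 - 3 * (k ^ 2 + k' ^ 2)) / 4
      + e / 4 * (-4 * ((k ^ 2 + k' ^ 2) ^ 2 + (k ^ 2 + k' ^ 2) * (k * k') - (k * k') ^ 2)
        + 3 * (k ^ 2 + k * k' + k' ^ 2) - 1)) * (k - k') by unfold kPart₂; ring, abs_mul]
  gcongr
  have hk2 : k ^ 2 ≤ 1/100 := by nlinarith
  have hk2' : k' ^ 2 ≤ 1/100 := by nlinarith
  have hkk := abs_le.1 (show |k * k'| ≤ 1/100 by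
    rw [abs_mul]
    nlinarith [abs_nonneg k, abs_nonneg k', abs_le.2 ⟨hk0, hk1⟩, abs_le.2 ⟨hk0', hk1'⟩])
  have h₁ : |-4 * ((k ^ 2 + k' ^ 2) ^ 2 + (k ^ 2 + k' ^ 2) * (k * k') - (k * k') ^ 2)
      + 3 * (k ^ 2 + k * k' + k' ^ 2) - 1| ≤ 2 := by
    rw [abs_le]; constructor <;> nlinarith [sq_nonneg k, sq_nonneg k', sq_nonneg (k + k')]
  have h₂ := abs_le.1 (show |e / 4 * (-4 * ((k ^ 2 + k' ^ 2) ^ 2 + (k ^ 2 + k' ^ 2) * (k * k')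
      - (k * k') ^ 2) + 3 * (k ^ 2 + k * k' + k' ^ 2) - 1)| ≤ 1/200 by
    rw [abs_mul, abs_of_nonneg (by linarith [he.1])]
    exact (mul_le_mul_of_nonneg_left h₁ (by linarith [he.1])).trans (by linarith [he.2]))
  have h₃ := abs_le.1 (show |(k + k') * (2 - 3 * (k ^ 2 + k' ^ 2))| ≤ 2/5 by
    rw [abs_le]; constructor <;> nlinarith)
  rw [abs_le]; constructor <;> linarith

lemma abs_rPart₂_sub_le (hc : c ∈ Icc (-1 : ℝ) 1) (hs : s ∈ Icc (-1 : ℝ) 1)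
    (hr : r ∈ Icc (2/5 : ℝ) (3/5)) (hr' : r' ∈ Icc (2/5 : ℝ) (3/5)) :
    |rPart₂ e c s r - rPart₂ e c s r'| ≤ 1/4 * |r - r'| := by
  have hρ := abs_mul_sqrt_sub_le hr hr'
  obtain ⟨he0, he1⟩ := he
  obtain ⟨hc0, hc1⟩ := hc
  obtain ⟨hr0, hr1⟩ := hr
  obtain ⟨hr0', hr1'⟩ := hr'
  set ρ := r * √(r ^ 2 + r ^ 4 / 2)
  set ρ' := r' * √(r' ^ 2 + r' ^ 4 / 2)
  set b := 1 - (r + r') - e ^ 2 * (1 - c) * (r + r') * (1 + (r ^ 2 + r' ^ 2) / 8) / 2 with hb_def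
  have hb : |b| ≤ 1/5 + 1/100 := by
    have h₀ : 0 ≤ e ^ 2 * (1 - c) * (r + r') * (1 + (r ^ 2 + r' ^ 2) / 8) / 2 := by
      have : 0 ≤ 1 - c := by linarith
      have : 0 ≤ r + r' := by linarith
      positivity
    have h₁ : e ^ 2 * (1 - c) * (r + r') * (1 + (r ^ 2 + r' ^ 2) / 8) / 2 ≤ 1/100 := by
      have : e ^ 2 ≤ 1/10000 := by nlinarith
      have : (1 - c) * (r + r') * (1 + (r ^ 2 + r' ^ 2) / 8)
          ≤ 2 * (6/5) * (1 + ((3/5) ^ 2 + (3/5) ^ 2) / 8) := by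
        gcongr <;> linarith
      nlinarith
    rw [abs_le, hb_def]; constructor <;> linarith
  have hes : |e * s / 2| ≤ 1/200 := by
    rw [abs_div, abs_mul, abs_of_nonneg he0, abs_two]
    have := abs_le.2 hs
    calc e * |s| / 2 ≤ (1/100) * 1 / 2 := by gcongr
      _ = 1/200 := by norm_num
  rw [show rPart₂ e c s r - rPart₂ e c s r' = b * (r - r') - e * s / 2 * (ρ - ρ') by
    unfold rPart₂; ring]
  calc |b * (r - r') - e * s / 2 * (ρ - ρ')| ≤ |b * (r - r')| + |e * s / 2 * (ρ - ρ')| :=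
        abs_sub _ _
    _ ≤ (1/5 + 1/100) * |r - r'| + 1/200 * (4 * |r - r'|) := by
        rw [abs_mul, abs_mul]; gcongr
    _ ≤ 1/4 * |r - r'| := by linarith [abs_nonneg (r - r')]

end Lipschitz

lemma lipschitzOnWith_chordMap {e c s : ℝ} (hp : (e, c, s) ∈ params) :
    LipschitzOnWith (1/2) (chordMap e c s) box := by
  obtain ⟨he : e ∈ Icc _ _, hc : c ∈ Icc _ _, hs : s ∈ Icc _ _⟩ := hp
  refine LipschitzOnWith.of_dist_le_mul ?_
  rintro ⟨k, r⟩ ⟨hk : k ∈ Icc _ _, hr : r ∈ Icc _ _⟩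
    ⟨k', r'⟩ ⟨hk' : k' ∈ Icc _ _, hr' : r' ∈ Icc _ _⟩
  have hdk : |k - k'| ≤ dist (k, r) (k', r') := by
    rw [Prod.dist_eq, Real.dist_eq]; exact le_max_left _ _
  have hdr : |r - r'| ≤ dist (k, r) (k', r') := by
    rw [Prod.dist_eq, Real.dist_eq, Real.dist_eq]; exact le_max_right _ _
  rw [chordMap_apply, chordMap_apply, Prod.dist_eq, Real.dist_eq, Real.dist_eq]
  push_cast
  refine max_le ?_ ?_
  · calc |kPart₁ e k - rPart₁ e c r - (kPart₁ e k' - rPart₁ e c r')|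
        ≤ |kPart₁ e k - kPart₁ e k'| + |rPart₁ e c r - rPart₁ e c r'| := by
          rw [sub_sub_sub_comm]; exact abs_sub _ _
      _ ≤ 1/4 * |k - k'| + 1/4 * |r - r'| :=
          add_le_add (abs_kPart₁_sub_le he hk hk') (abs_rPart₁_sub_le he hc hr hr')
      _ ≤ 1/2 * dist (k, r) (k', r') := by linarith
  · calc |kPart₂ e k + rPart₂ e c s r - (kPart₂ e k' + rPart₂ e c s r')|
        ≤ |kPart₂ e k - kPart₂ e k'| + |rPart₂ e c s r - rPart₂ e c s r'| := by
          rw [add_sub_add_comm]; exact abs_add_le _ _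
      _ ≤ 1/4 * |k - k'| + 1/4 * |r - r'| :=
          add_le_add (abs_kPart₂_sub_le he hk hk') (abs_rPart₂_sub_le he hc hs hr hr')
      _ ≤ 1/2 * dist (k, r) (k', r') := by linarith

instance : Nonempty box := ⟨⟨(0, 1/2), by norm_num [box]⟩⟩

instance : CompleteSpace box := (isClosed_Icc.prod isClosed_Icc).completeSpace_coe

def chordMapOn (p : params) : box → box := (mapsTo_chordMap p.2).restrict _ _ _

lemma contractingWith_chordMapOn (p : params) : ContractingWith (1/2) (chordMapOn p) :=
  ⟨by norm_num,
    (lipschitzOnWith_chordMap p.2).mapsToRestrict (mapsTo_chordMap p.2)⟩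

def solution (p : params) : box := ContractingWith.fixedPoint _ (contractingWith_chordMapOn p)

lemma continuous_solution : Continuous solution :=
  ContractingWith.continuous_fixedPoint _ fun x => by
    refine Continuous.subtype_mk ?_ _
    simp only [chordMap, residual₁, residual₂]
    fun_prop

lemma residual_solution_eq_zero (p : params) :
    residual₁ p.1.1 p.1.2.1 (solution p).1.1 (solution p).1.2 = 0 ∧
      residual₂ p.1.1 p.1.2.1 p.1.2.2 (solution p).1.1 (solution p).1.2 = 0 := by
  have h : chordMap p.1.1 p.1.2.1 p.1.2.2 (solution p).1 = (solution p).1 :=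
    congrArg Subtype.val (contractingWith_chordMapOn p).fixedPoint_isFixedPt
  simp only [chordMap, Prod.ext_iff] at h
  exact ⟨by linarith [h.1], by linarith [h.2]⟩

section Asymptotics

variable {e c s k r : ℝ} (he : e ∈ Icc (0 : ℝ) (1/100)) (hc : c ∈ Icc (-1 : ℝ) 1)
  (hk : k ∈ Icc (-(1/10) : ℝ) (1/10)) (hr : r ∈ Icc (2/5 : ℝ) (3/5))
  (h₁ : residual₁ e c k r = 0)
include he hc hk hr h₁

lemma abs_le_of_residual₁_eq_zero : |k| ≤ e := by
  have hA := div_eight_mul_mem_Icc he hk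
  have hB := mul_sq_div_two_mul_mem_Icc he hc hr
  have hk3 : |k ^ 3| ≤ |k| / 100 := by
    rw [abs_pow, pow_succ, sq_abs]
    have : k ^ 2 ≤ 1/100 := by nlinarith [hk.1, hk.2]
    nlinarith [abs_nonneg k]
  have hkeq : k = k ^ 3 + (e / 8 * (7 * k ^ 4 - 4 * k ^ 2 + 1) - e * (r ^ 2 / 2) * (1 - c)) := by
    unfold residual₁ at h₁; linarith
  have hdiff : |e / 8 * (7 * k ^ 4 - 4 * k ^ 2 + 1) - e * (r ^ 2 / 2) * (1 - c)| ≤ e / 2 := by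
    rw [abs_le]; constructor <;> linarith [hA.1, hA.2, hB.1, hB.2]
  have := abs_add_le (k ^ 3) (e / 8 * (7 * k ^ 4 - 4 * k ^ 2 + 1) - e * (r ^ 2 / 2) * (1 - c))
  rw [← hkeq] at this
  linarith [he.1]

variable (hs : s ∈ Icc (-1 : ℝ) 1) (h₂ : residual₂ e c s k r = 0)
include hs h₂

lemma abs_two_mul_sq_sub_le : |2 * r ^ 2 - 1/2| ≤ e := by
  have hke := abs_le_of_residual₁_eq_zero he hc hk hr h₁
  have hρ := abs_le.1 (abs_mul_mul_sqrt_mul_le he hs hr)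
  have hP := abs_le.1 (abs_div_two_mul_mul_le he hk)
  have hC := sq_mul_mem_Icc he hc hr
  have hk2 : k ^ 2 ≤ e / 10 := by
    rw [← sq_abs]
    nlinarith [abs_nonneg k, abs_le.2 ⟨hk.1, hk.2⟩]
  have heq : 2 * r ^ 2 - 1/2 = k ^ 2 - 3/2 * k ^ 4 + e / 2 * k * (-4 * k ^ 4 + 3 * k ^ 2 - 1)
      - e * r * √(r ^ 2 + r ^ 4 / 2) * s - e ^ 2 * (1 - c) * (r ^ 2 + r ^ 4 / 8) := by
    unfold residual₂ at h₂; linarith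
  rw [heq, abs_le]
  constructor <;> nlinarith [sq_nonneg k, sq_nonneg (k ^ 2), hC.1, hC.2]

lemma abs_sub_div_eight_mul_le : |k - e / 8 * c| ≤ e ^ 2 := by
  have hke := abs_le_of_residual₁_eq_zero he hc hk hr h₁
  have hre := abs_two_mul_sq_sub_le he hc hk hr h₁ hs h₂
  obtain ⟨he0, he1⟩ := he
  have hk' : |k| ≤ 1/10 := abs_le.2 hk
  have hk2 : k ^ 2 ≤ e ^ 2 := by rw [← sq_abs]; gcongr
  have heq : k - e / 8 * c = k ^ 3 + e / 8 * (k ^ 2 * (7 * k ^ 2 - 4))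
      - e / 4 * (2 * r ^ 2 - 1/2) * (1 - c) := by
    unfold residual₁ at h₁; linear_combination h₁
  have t₁ : |k ^ 3| ≤ e ^ 2 / 10 := by
    rw [abs_pow, pow_succ, sq_abs]
    calc k ^ 2 * |k| ≤ e ^ 2 * (1/10) := mul_le_mul hk2 hk' (abs_nonneg _) (sq_nonneg _)
      _ = e ^ 2 / 10 := by ring
  have t₂ : |e / 8 * (k ^ 2 * (7 * k ^ 2 - 4))| ≤ e ^ 2 / 10 := by
    have : |7 * k ^ 2 - 4| ≤ 4 := by
      rw [abs_le]; constructor <;> nlinarith [sq_nonneg k, hk.1, hk.2]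
    rw [abs_mul, abs_mul, abs_of_nonneg (by positivity : 0 ≤ e / 8), abs_of_nonneg (sq_nonneg k)]
    calc e / 8 * (k ^ 2 * |7 * k ^ 2 - 4|) ≤ (1/100) / 8 * (e ^ 2 * 4) := by gcongr
      _ ≤ e ^ 2 / 10 := by nlinarith [sq_nonneg e]
  have t₃ : |e / 4 * (2 * r ^ 2 - 1/2) * (1 - c)| ≤ e ^ 2 / 2 := by
    have h1c : 0 ≤ 1 - c := by linarith [hc.2]
    rw [abs_mul, abs_mul, abs_of_nonneg (by positivity : 0 ≤ e / 4), abs_of_nonneg h1c]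
    calc e / 4 * |2 * r ^ 2 - 1/2| * (1 - c) ≤ e / 4 * e * 2 := by gcongr; linarith [hc.1]
      _ = e ^ 2 / 2 := by ring
  rw [heq]
  calc _ ≤ |k ^ 3 + e / 8 * (k ^ 2 * (7 * k ^ 2 - 4))| + |e / 4 * (2 * r ^ 2 - 1/2) * (1 - c)| :=
        abs_sub _ _
    _ ≤ |k ^ 3| + |e / 8 * (k ^ 2 * (7 * k ^ 2 - 4))|
          + |e / 4 * (2 * r ^ 2 - 1/2) * (1 - c)| := by
        gcongr; exact abs_add_le _ _
    _ ≤ e ^ 2 := by linarith [sq_nonneg e]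

end Asymptotics

def param (φ ε : ℝ) : params :=
  ⟨(projIcc 0 (1/100) (by norm_num) ε, Real.cos (2 * φ), Real.sin (2 * φ)),
    (projIcc 0 (1/100) (by norm_num) ε).2, Real.cos_mem_Icc _, Real.sin_mem_Icc _⟩

/-- The solution branch; for `ε ∉ [0, 1/100]` it is the branch at the nearest endpoint. -/
def branch (φ ε : ℝ) : ℝ × ℝ := (solution (param φ ε)).1

lemma continuous_branch : Continuous fun q : ℝ × ℝ => branch q.1 q.2 :=
  continuous_subtype_val.comp (continuous_solution.comp (Continuous.subtype_mk (by fun_prop) _))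

lemma branch_add_two_pi (φ ε : ℝ) : branch (φ + 2 * Real.pi) ε = branch φ ε := by
  have h : 2 * (φ + 2 * Real.pi) = 2 * φ + 2 * Real.pi + 2 * Real.pi := by ring
  simp only [branch, param, h, Real.cos_add_two_pi, Real.sin_add_two_pi]

lemma branch_mem_box (φ ε : ℝ) : branch φ ε ∈ box := (solution (param φ ε)).2

variable {φ ε : ℝ} (hε : ε ∈ Icc (0 : ℝ) (1/100))
include hε

lemma residual_branch_eq_zero :
    residual₁ ε (Real.cos (2 * φ)) (branch φ ε).1 (branch φ ε).2 = 0 ∧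
      residual₂ ε (Real.cos (2 * φ)) (Real.sin (2 * φ)) (branch φ ε).1 (branch φ ε).2 = 0 := by
  have h := residual_solution_eq_zero (param φ ε)
  have hε' : (param φ ε).1.1 = ε := by simp only [param, projIcc_of_mem _ hε]
  rwa [hε'] at h

lemma abs_branch_fst_sub_le : |(branch φ ε).1 - ε / 8 * Real.cos (2 * φ)| ≤ ε ^ 2 := by
  obtain ⟨h₁, h₂⟩ := residual_branch_eq_zero hε
  obtain ⟨hk, hr⟩ := branch_mem_box φ ε
  exact abs_sub_div_eight_mul_le hε (Real.cos_mem_Icc _) hk hr h₁ (Real.sin_mem_Icc _) h₂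

omit hε in
lemma branch_zero (φ : ℝ) : branch φ 0 = (0, 1/2) := by
  have h0 : (0 : ℝ) ∈ Icc (0 : ℝ) (1/100) := by norm_num
  obtain ⟨h₁, h₂⟩ := residual_branch_eq_zero (φ := φ) h0
  obtain ⟨hk, hr⟩ := branch_mem_box φ 0
  have hk0 := abs_le_of_residual₁_eq_zero h0 (Real.cos_mem_Icc _) hk hr h₁
  have hr0 := abs_two_mul_sq_sub_le h0 (Real.cos_mem_Icc _) hk hr h₁ (Real.sin_mem_Icc _) h₂
  refine Prod.ext (abs_nonpos_iff.1 hk0) ?_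
  have hsq : (branch φ 0).2 ^ 2 = (1/2) ^ 2 := by linarith [abs_nonpos_iff.1 hr0]
  exact (pow_left_inj₀ (by linarith [hr.1]) (by norm_num) two_ne_zero).1 hsq

end

end StrainDisplacement

/-- **Leading-order strain–displacement relation via matched conserved
quantities.** The system (E1)–(E2), obtained by matching the conserved
quantities along the transformed unstable manifold (parametrized by r, φ) with
their values on the ε-perturbed periodic orbits of wavenumber κ, has a branch
of solutions (κ(φ,ε), r(φ,ε)), continuous on ℝ × [0,ε₀) and 2π-periodic in φ,
with κ(φ,0) = 0, r(φ,0) = 1/2 and κ(φ,ε) = (ε/8)cos 2φ + O(ε²). -/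
theorem strain_displacement_matching :
    ∃ ε₀ > (0 : ℝ), ∃ C > (0 : ℝ), ∃ κ r : ℝ → ℝ → ℝ,
      ContinuousOn (fun p : ℝ × ℝ => κ p.1 p.2) (Set.univ ×ˢ Set.Ico 0 ε₀) ∧
      ContinuousOn (fun p : ℝ × ℝ => r p.1 p.2) (Set.univ ×ˢ Set.Ico 0 ε₀) ∧
      (∀ φ ε : ℝ, κ (φ + 2 * Real.pi) ε = κ φ ε) ∧
      (∀ φ ε : ℝ, r (φ + 2 * Real.pi) ε = r φ ε) ∧
      (∀ φ : ℝ, κ φ 0 = 0) ∧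
      (∀ φ : ℝ, r φ 0 = 1 / 2) ∧
      (∀ φ : ℝ, ∀ ε ∈ Set.Ico (0 : ℝ) ε₀,
        0 < r φ ε ∧
        -- (E1)
        ε * ((r φ ε) ^ 2 / 2) * (1 - Real.cos (2 * φ))
          = -(κ φ ε) * (1 - (κ φ ε) ^ 2)
            + (ε / 8) * (7 * (κ φ ε) ^ 4 - 4 * (κ φ ε) ^ 2 + 1) ∧
        -- (E2)
        2 * (r φ ε) ^ 2
            + ε * (r φ ε) * Real.sqrt ((r φ ε) ^ 2 + (r φ ε) ^ 4 / 2) * Real.sin (2 * φ)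
            + ε ^ 2 * (1 - Real.cos (2 * φ)) * ((r φ ε) ^ 2 + (r φ ε) ^ 4 / 8)
          = (1 / 2) * (1 - (κ φ ε) ^ 2) * (1 + 3 * (κ φ ε) ^ 2)
            + (ε / 2) * (κ φ ε) * (-4 * (κ φ ε) ^ 4 + 3 * (κ φ ε) ^ 2 - 1)) ∧
      (∀ φ : ℝ, ∀ ε ∈ Set.Ico (0 : ℝ) ε₀,
        |κ φ ε - (ε / 8) * Real.cos (2 * φ)| ≤ C * ε ^ 2) := by
  open StrainDisplacement in
  refine ⟨1/100, by norm_num, 1, one_pos, fun φ ε => (branch φ ε).1, fun φ ε => (branch φ ε).2,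
    (continuous_fst.comp continuous_branch).continuousOn,
    (continuous_snd.comp continuous_branch).continuousOn,
    fun φ ε => congrArg Prod.fst (branch_add_two_pi φ ε),
    fun φ ε => congrArg Prod.snd (branch_add_two_pi φ ε),
    fun φ => congrArg Prod.fst (branch_zero φ), fun φ => congrArg Prod.snd (branch_zero φ),
    fun φ ε hε => ?_, fun φ ε hε => by simpa using abs_branch_fst_sub_le (Ico_subset_Icc_self hε)⟩
  obtain ⟨h₁, h₂⟩ := residual_branch_eq_zero (φ := φ) (Ico_subset_Icc_self hε)
  exact ⟨by linarith [(branch_mem_box φ ε).2.1], sub_eq_zero.1 h₁, sub_eq_zero.1 h₂⟩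
end
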